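/- Fix w ∈ ℂ and consider ℂ^d with the polyproduct e_j ⊛ e_j = e_j − w Σ_{l≠j}(σ_{jl} e_j + σ_{lj} e_l), e_j ⊛ e_l = w(σ_{jl} e_j + σ_{lj} e_l) for j ≠ l, extended bilinearly. A linear functional η(Σ α_j e_j) = Σ η_j α_j with Σ η_j = 1 is a character (η(a ⊛ b) = η(a)η(b) for all a, b) if and only if there exists z with p(z) = w and η_j = δ_j(z) for all j. -/
import Mathlib


open Polynomial Finset

/-- `σ_{jl} = 1/(p'(λ_l)(λ_j - λ_l))` where `p = ∏ (X - λ_i)`. -/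
noncomputable def sigma {d : ℕ} (lam : Fin d → ℂ) (j l : Fin d) : ℂ :=
  1 / ((Polynomial.derivative (∏ i, (X - C (lam i)))).eval (lam l) * (lam j - lam l))

/-- Lagrange basis polynomial `δ_j` evaluated at `z`. -/
noncomputable def lagrange {d : ℕ} (lam : Fin d → ℂ) (j : Fin d) (z : ℂ) : ℂ :=
  ∏ l ∈ Finset.univ.erase j, (z - lam l) / (lam j - lam l)

/-- The polyproduct on `ℂ^d` for a fixed value of `w`: the bilinear extension of the
rules `e_j ⊛ e_j = e_j - w Σ_{l≠j}(σ_{jl} e_j + σ_{lj} e_l)` and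
`e_j ⊛ e_l = w (σ_{jl} e_j + σ_{lj} e_l)` for `j ≠ l`. -/
noncomputable def ppw {d : ℕ} (lam : Fin d → ℂ) (w : ℂ) (a b : Fin d → ℂ)
    (j : Fin d) : ℂ :=
  a j * b j - w * ∑ l ∈ Finset.univ.erase j,
    sigma lam j l * (a j - a l) * (b j - b l)

-- ===== auxiliary lemmas =====

lemma deriv_eval {d : ℕ} (lam : Fin d → ℂ) (j : Fin d) :
    (Polynomial.derivative (∏ i, (X - C (lam i)))).eval (lam j)
      = ∏ l ∈ Finset.univ.erase j, (lam j - lam l) := by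
  have h : (∏ i, (X - C (lam i))) = Lagrange.nodal Finset.univ lam := rfl
  rw [h, Lagrange.eval_nodal_derivative_eval_node_eq (mem_univ j), Lagrange.eval_nodal]

lemma deriv_ne_zero {d : ℕ} {lam : Fin d → ℂ} (hinj : Function.Injective lam) (j : Fin d) :
    (∏ l ∈ Finset.univ.erase j, (lam j - lam l)) ≠ 0 := by
  rw [Finset.prod_ne_zero_iff]
  intro l hl
  have : l ≠ j := (Finset.mem_erase.mp hl).1
  exact sub_ne_zero_of_ne fun h => this (hinj h.symm)

lemma sigma_eq {d : ℕ} (lam : Fin d → ℂ) (j l : Fin d) :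
    sigma lam j l = 1 / ((∏ m ∈ Finset.univ.erase l, (lam l - lam m)) * (lam j - lam l)) := by
  rw [sigma, deriv_eval]

lemma sigma_diag {d : ℕ} (lam : Fin d → ℂ) (j : Fin d) : sigma lam j j = 0 := by
  simp [sigma]

lemma sigma_ne_zero {d : ℕ} {lam : Fin d → ℂ} (hinj : Function.Injective lam)
    {j l : Fin d} (hjl : j ≠ l) : sigma lam j l ≠ 0 := by
  rw [sigma_eq]
  exact div_ne_zero one_ne_zero (mul_ne_zero (deriv_ne_zero hinj l)
    (sub_ne_zero_of_ne fun h => hjl (hinj h)))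

lemma lagrange_eq {d : ℕ} (lam : Fin d → ℂ) (j : Fin d) (z : ℂ) :
    lagrange lam j z = (∏ l ∈ Finset.univ.erase j, (z - lam l))
      / (∏ l ∈ Finset.univ.erase j, (lam j - lam l)) := by
  rw [lagrange, Finset.prod_div_distrib]

lemma sum_lagrange {d : ℕ} (hd : 1 ≤ d) {lam : Fin d → ℂ} (hinj : Function.Injective lam)
    (z : ℂ) : ∑ j, lagrange lam j z = 1 := by
  have hne : (Finset.univ : Finset (Fin d)).Nonempty := ⟨⟨0, hd⟩, mem_univ _⟩
  have h := Lagrange.sum_basis (v := lam) hinj.injOn hne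
  have h2 := congrArg (Polynomial.eval z) h
  rw [Polynomial.eval_finset_sum, Polynomial.eval_one] at h2
  rw [← h2]
  refine Finset.sum_congr rfl fun j _ => ?_
  rw [Lagrange.basis, Polynomial.eval_prod, lagrange]
  refine Finset.prod_congr rfl fun l hl => ?_
  rw [Lagrange.basisDivisor]
  simp [div_eq_inv_mul]

lemma lagrange_at_node {d : ℕ} {lam : Fin d → ℂ} (hinj : Function.Injective lam)
    (j k : Fin d) : lagrange lam j (lam k) = if j = k then 1 else 0 := by
  by_cases h : j = k
  · subst h
    simp only [if_pos rfl, lagrange]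
    refine Finset.prod_eq_one fun l hl => ?_
    have : l ≠ j := (Finset.mem_erase.mp hl).1
    exact div_self (sub_ne_zero_of_ne fun hh => this (hinj hh.symm))
  · rw [if_neg h, lagrange]
    refine Finset.prod_eq_zero (Finset.mem_erase.mpr ⟨Ne.symm h, mem_univ k⟩) ?_
    simp

lemma R_of_z {d : ℕ} {lam : Fin d → ℂ} (hinj : Function.Injective lam)
    (z : ℂ) {j l : Fin d} (hjl : j ≠ l) :
    (∏ i, (X - C (lam i))).eval z *
        (sigma lam j l * lagrange lam j z + sigma lam l j * lagrange lam l z)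
      = lagrange lam j z * lagrange lam l z := by
  set Q : ℂ := ∏ m ∈ (Finset.univ.erase j).erase l, (z - lam m) with hQ
  have hjl' : lam j - lam l ≠ 0 := sub_ne_zero_of_ne fun h => hjl (hinj h)
  have hDj := deriv_ne_zero hinj j
  have hDl := deriv_ne_zero hinj l
  have hPj : (∏ m ∈ Finset.univ.erase j, (z - lam m)) = (z - lam l) * Q := by
    rw [hQ]
    exact (Finset.mul_prod_erase _ _ (Finset.mem_erase.mpr ⟨Ne.symm hjl, mem_univ l⟩)).symm
  have hPl : (∏ m ∈ Finset.univ.erase l, (z - lam m)) = (z - lam j) * Q := by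
    rw [hQ, Finset.erase_right_comm]
    exact (Finset.mul_prod_erase _ _ (Finset.mem_erase.mpr ⟨hjl, mem_univ j⟩)).symm
  have hp : (∏ i, (X - C (lam i))).eval z = (z - lam j) * ((z - lam l) * Q) := by
    rw [Polynomial.eval_prod]
    simp only [Polynomial.eval_sub, Polynomial.eval_X, Polynomial.eval_C]
    rw [← hPj]
    exact (Finset.mul_prod_erase _ _ (mem_univ j)).symm
  rw [hp, sigma_eq, sigma_eq, lagrange_eq, lagrange_eq, hPj, hPl]
  have h1 : lam l - lam j ≠ 0 := fun h => hjl' (by linear_combination -h)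
  field_simp
  ring

lemma char_of_R {d : ℕ} (lam : Fin d → ℂ) (w : ℂ) (η : Fin d → ℂ)
    (hη : ∑ j, η j = 1)
    (hR : ∀ j l : Fin d, j ≠ l →
      w * (sigma lam j l * η j + sigma lam l j * η l) = η j * η l)
    (a b : Fin d → ℂ) :
    ∑ j, η j * ppw lam w a b j = (∑ j, η j * a j) * (∑ j, η j * b j) := by
  have herase : ∀ j : Fin d,
      (∑ l ∈ Finset.univ.erase j, sigma lam j l * (a j - a l) * (b j - b l))
        = ∑ l, sigma lam j l * (a j - a l) * (b j - b l) := fun j =>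
    Finset.sum_erase _ (by simp [sigma_diag])
  set S : ℂ := ∑ j, ∑ l, η j * (sigma lam j l * (a j - a l) * (b j - b l)) with hS
  have hswap : (∑ j : Fin d, ∑ l : Fin d,
      η l * (sigma lam l j * (a j - a l) * (b j - b l))) = S := by
    rw [Finset.sum_comm, hS]
    exact Finset.sum_congr rfl fun j _ => Finset.sum_congr rfl fun l _ => by ring
  have h2 : 2 * (w * S) =
      ∑ j : Fin d, ∑ l : Fin d, η j * η l * ((a j - a l) * (b j - b l)) := by
    have e1 : 2 * (w * S) = ∑ j : Fin d, ∑ l : Fin d,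
        (w * (sigma lam j l * η j + sigma lam l j * η l)) * ((a j - a l) * (b j - b l)) := by
      rw [two_mul]
      nth_rewrite 2 [← hswap]
      rw [hS, Finset.mul_sum, Finset.mul_sum, ← Finset.sum_add_distrib]
      refine Finset.sum_congr rfl fun j _ => ?_
      rw [Finset.mul_sum, Finset.mul_sum, ← Finset.sum_add_distrib]
      exact Finset.sum_congr rfl fun l _ => by ring
    rw [e1]
    refine Finset.sum_congr rfl fun j _ => Finset.sum_congr rfl fun l _ => ?_
    by_cases hjl : j = l
    · subst hjl; ring
    · rw [hR j l hjl]
  have h3 : (∑ j : Fin d, ∑ l : Fin d, η j * η l * ((a j - a l) * (b j - b l)))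
      = 2 * ((∑ j, η j * (a j * b j)) - (∑ j, η j * a j) * (∑ j, η j * b j)) := by
    have expand : ∀ j : Fin d, (∑ l, η j * η l * ((a j - a l) * (b j - b l)))
        = η j * (a j * b j) * (∑ l, η l) - η j * a j * (∑ l, η l * b l)
          - η j * b j * (∑ l, η l * a l) + η j * (∑ l, η l * (a l * b l)) := by
      intro j
      rw [Finset.mul_sum, Finset.mul_sum, Finset.mul_sum, Finset.mul_sum]
      rw [← Finset.sum_sub_distrib, ← Finset.sum_sub_distrib, ← Finset.sum_add_distrib]
      exact Finset.sum_congr rfl fun l _ => by ring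
    rw [Finset.sum_congr rfl fun j _ => expand j]
    rw [Finset.sum_add_distrib, Finset.sum_sub_distrib, Finset.sum_sub_distrib]
    rw [← Finset.sum_mul, ← Finset.sum_mul, ← Finset.sum_mul, ← Finset.sum_mul, hη]
    ring
  have hws : w * S = (∑ j, η j * (a j * b j)) - (∑ j, η j * a j) * (∑ j, η j * b j) := by
    have := h2.trans h3
    exact mul_left_cancel₀ (two_ne_zero) this
  have lhs : (∑ j, η j * ppw lam w a b j)
      = (∑ j, η j * (a j * b j)) - w * S := by
    simp only [ppw, herase]
    rw [hS, Finset.mul_sum, ← Finset.sum_sub_distrib]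
    refine Finset.sum_congr rfl fun j _ => ?_
    simp only [← Finset.mul_sum]
    ring
  rw [lhs, hws]
  ring

lemma R_of_char {d : ℕ} (lam : Fin d → ℂ) (w : ℂ) (η : Fin d → ℂ)
    (h : ∀ a b : Fin d → ℂ,
      ∑ j, η j * ppw lam w a b j = (∑ j, η j * a j) * (∑ j, η j * b j))
    {j l : Fin d} (hjl : j ≠ l) :
    w * (sigma lam j l * η j + sigma lam l j * η l) = η j * η l := by
  set a : Fin d → ℂ := fun k => if k = j then 1 else 0 with ha
  set b : Fin d → ℂ := fun k => if k = l then 1 else 0 with hb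
  have hc := h a b
  have hra : (∑ k, η k * a k) = η j := by
    rw [ha]; simp
  have hrb : (∑ k, η k * b k) = η l := by
    rw [hb]; simp
  rw [hra, hrb] at hc
  rw [← hc]
  have gj : η j * ppw lam w a b j = w * (sigma lam j l * η j) := by
    have hinner : (∑ m ∈ Finset.univ.erase j,
        sigma lam j m * (a j - a m) * (b j - b m)) = - sigma lam j l := by
      rw [Finset.sum_eq_single_of_mem l
        (Finset.mem_erase.mpr ⟨Ne.symm hjl, mem_univ l⟩)]
      · simp [ha, hb, hjl, Ne.symm hjl]
      · intro m hm hml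
        have hmj : m ≠ j := (Finset.mem_erase.mp hm).1
        simp [ha, hb, hmj, hml, hjl]
    rw [ppw, hinner]
    simp [ha, hb, hjl, Ne.symm hjl]
    ring
  have gl : η l * ppw lam w a b l = w * (sigma lam l j * η l) := by
    have hinner : (∑ m ∈ Finset.univ.erase l,
        sigma lam l m * (a l - a m) * (b l - b m)) = - sigma lam l j := by
      rw [Finset.sum_eq_single_of_mem j
        (Finset.mem_erase.mpr ⟨hjl, mem_univ j⟩)]
      · simp [ha, hb, hjl, Ne.symm hjl]
      · intro m hm hmj
        have hml : m ≠ l := (Finset.mem_erase.mp hm).1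
        simp [ha, hb, hmj, hml, Ne.symm hjl]
    rw [ppw, hinner]
    simp [ha, hb, hjl, Ne.symm hjl]
    ring
  have gz : ∀ k, k ≠ j → k ≠ l → η k * ppw lam w a b k = 0 := by
    intro k hkj hkl
    have hinner : (∑ m ∈ Finset.univ.erase k,
        sigma lam k m * (a k - a m) * (b k - b m)) = 0 := by
      refine Finset.sum_eq_zero fun m hm => ?_
      by_cases hmj : m = j
      · subst hmj
        have : m ≠ l := hjl
        simp [ha, hb, hkj, hkl, this]
      · simp [ha, hb, hkj, hkl, hmj]
    rw [ppw, hinner]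
    simp [ha, hb, hkj, hkl]
  rw [Finset.sum_eq_add_of_mem j l (mem_univ j) (mem_univ l) hjl
    (fun c _ hc => gz c hc.1 hc.2), gj, gl]
  ring

theorem stmt9 {d : ℕ} (hd : 1 ≤ d) (lam : Fin d → ℂ) (hinj : Function.Injective lam)
    (w : ℂ) (η : Fin d → ℂ) (hη : ∑ j, η j = 1) :
    (∀ a b : Fin d → ℂ,
        ∑ j, η j * ppw lam w a b j = (∑ j, η j * a j) * (∑ j, η j * b j)) ↔
      ∃ z : ℂ, (∏ i, (X - C (lam i))).eval z = w ∧ ∀ j, η j = lagrange lam j z := by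
  constructor
  · intro h
    have hR : ∀ j l : Fin d, j ≠ l →
        w * (sigma lam j l * η j + sigma lam l j * η l) = η j * η l :=
      fun j l hjl => R_of_char lam w η h hjl
    by_cases hw : w = 0
    · subst hw
      obtain ⟨j₀, -, hj₀⟩ := Finset.exists_ne_zero_of_sum_ne_zero
        (s := (univ : Finset (Fin d))) (f := η) (by rw [hη]; exact one_ne_zero)
      have hz0 : ∀ l, l ≠ j₀ → η l = 0 := by
        intro l hl
        have h1 := hR l j₀ hl
        have h0 : η l * η j₀ = 0 := by linear_combination -h1
        exact (mul_eq_zero.mp h0).resolve_right hj₀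
      have hj1 : η j₀ = 1 := by
        rw [← hη]
        exact (Finset.sum_eq_single j₀ (fun b _ hb => hz0 b hb)
          (fun hh => absurd (mem_univ j₀) hh)).symm
      refine ⟨lam j₀, ?_, ?_⟩
      · rw [Polynomial.eval_prod]
        exact Finset.prod_eq_zero (mem_univ j₀) (by simp)
      · intro j
        rw [lagrange_at_node hinj]
        by_cases hj : j = j₀
        · rw [if_pos hj, hj, hj1]
        · rw [if_neg hj, hz0 j hj]
    · -- w ≠ 0
      have hηne : ∀ j, η j ≠ 0 := by
        by_contra hcon
        push_neg at hcon
        obtain ⟨j, hj⟩ := hcon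
        have hall : ∀ l, η l = 0 := by
          intro l
          by_cases hl : l = j
          · rw [hl]; exact hj
          · have h1 := hR l j hl
            rw [hj] at h1
            have h0 : w * (sigma lam l j * η l) = 0 := by linear_combination h1
            rcases mul_eq_zero.mp h0 with h2 | h2
            · exact absurd h2 hw
            · exact (mul_eq_zero.mp h2).resolve_left (sigma_ne_zero hinj hl)
        rw [Finset.sum_eq_zero (fun l _ => hall l)] at hη
        exact one_ne_zero hη.symm
      set j₀ : Fin d := ⟨0, hd⟩ with hj₀def
      set z : ℂ := lam j₀ + w / ((∏ m ∈ Finset.univ.erase j₀, (lam j₀ - lam m)) * η j₀)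
        with hzdef
      have hkey : ∀ j, (z - lam j) * ((∏ m ∈ Finset.univ.erase j, (lam j - lam m)) * η j)
          = w := by
        intro j
        have hDη : (∏ m ∈ Finset.univ.erase j₀, (lam j₀ - lam m)) * η j₀ ≠ 0 :=
          mul_ne_zero (deriv_ne_zero hinj j₀) (hηne j₀)
        by_cases hj : j = j₀
        · rw [hj]
          have hzz : z - lam j₀ = w / ((∏ m ∈ Finset.univ.erase j₀, (lam j₀ - lam m)) * η j₀) := by
            rw [hzdef]; ring
          rw [hzz, div_mul_cancel₀ _ hDη]
        · have hRj := hR j j₀ hj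
          rw [sigma_eq, sigma_eq] at hRj
          have h1 : lam j - lam j₀ ≠ 0 := sub_ne_zero_of_ne fun hh => hj (hinj hh)
          have h2 : lam j₀ - lam j ≠ 0 := fun hh => h1 (by linear_combination -hh)
          have hDj : (∏ m ∈ Finset.univ.erase j, (lam j - lam m)) ≠ 0 :=
            deriv_ne_zero hinj j
          have hD0 : (∏ m ∈ Finset.univ.erase j₀, (lam j₀ - lam m)) ≠ 0 :=
            deriv_ne_zero hinj j₀
          field_simp at hRj
          have hbr2 : w * ((∏ m ∈ Finset.univ.erase j, (lam j - lam m)) * η j)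
              - w * ((∏ m ∈ Finset.univ.erase j₀, (lam j₀ - lam m)) * η j₀)
              + (lam j₀ - lam j) * (((∏ m ∈ Finset.univ.erase j, (lam j - lam m)) * η j)
                * ((∏ m ∈ Finset.univ.erase j₀, (lam j₀ - lam m)) * η j₀)) = 0 := by
            apply mul_left_cancel₀ h2
            rw [mul_zero]
            linear_combination hRj
          have hz2 : (z - lam j) * ((∏ m ∈ Finset.univ.erase j₀, (lam j₀ - lam m)) * η j₀)
              = (lam j₀ - lam j) * ((∏ m ∈ Finset.univ.erase j₀, (lam j₀ - lam m)) * η j₀)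
                + w := by
            rw [hzdef, sub_mul, add_mul, div_mul_cancel₀ _ hDη]
            ring
          apply mul_right_cancel₀ hDη
          linear_combination ((∏ m ∈ Finset.univ.erase j, (lam j - lam m)) * η j) * hz2 + hbr2
      have hzne : ∀ j, z - lam j ≠ 0 := by
        intro j h0
        have := hkey j
        rw [h0, zero_mul] at this
        exact hw this.symm
      have hηeq : ∀ j, η j = w /
          ((z - lam j) * (∏ m ∈ Finset.univ.erase j, (lam j - lam m))) := by
        intro j
        have := hkey j
        rw [eq_div_iff (mul_ne_zero (hzne j) (deriv_ne_zero hinj j))]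
        linear_combination this
      have hP : (∏ i, (X - C (lam i))).eval z = ∏ i, (z - lam i) := by
        rw [Polynomial.eval_prod]
        exact Finset.prod_congr rfl fun i _ => by
          rw [Polynomial.eval_sub, Polynomial.eval_X, Polynomial.eval_C]
      have hPne : (∏ i, (z - lam i)) ≠ 0 :=
        Finset.prod_ne_zero_iff.mpr fun i _ => hzne i
      have hlag : ∀ j, lagrange lam j z
          = (∏ i, (z - lam i)) / ((z - lam j) * (∏ m ∈ Finset.univ.erase j, (lam j - lam m))) := by
        intro j
        rw [lagrange_eq]
        have hprod : (∏ i, (z - lam i))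
            = (z - lam j) * ∏ m ∈ Finset.univ.erase j, (z - lam m) :=
          (Finset.mul_prod_erase _ _ (mem_univ j)).symm
        rw [hprod]
        exact (mul_div_mul_left _ _ (hzne j)).symm
      have hwP : (∏ i, (z - lam i)) = w := by
        have hsum : ∑ j, η j = ∑ j, (w / (∏ i, (z - lam i))) * lagrange lam j z := by
          refine Finset.sum_congr rfl fun j _ => ?_
          rw [hηeq j, hlag j, div_mul_div_comm, div_eq_div_iff
            (mul_ne_zero (hzne j) (deriv_ne_zero hinj j))
            (mul_ne_zero hPne (mul_ne_zero (hzne j) (deriv_ne_zero hinj j)))]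
          ring
        rw [hη, ← Finset.mul_sum, sum_lagrange hd hinj z, mul_one] at hsum
        rw [eq_div_iff hPne] at hsum
        linear_combination hsum
      refine ⟨z, by rw [hP, hwP], fun j => ?_⟩
      rw [hηeq j, hlag j, hwP]
  · rintro ⟨z, hz, hηz⟩
    intro a b
    refine char_of_R lam w η hη (fun j l hjl => ?_) a b
    rw [hηz j, hηz l, ← hz]
    exact R_of_z hinj z hjl
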